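/- arXiv:2507.00060 — 3 statements merged into one kernel-verified Lean document; each statement's English description precedes it below -/
import Mathlib

section
/- For bounded star bodies A₁, A₂ ⊆ ℝ^d, the radial metric δ(A₁,A₂) := sup_{θ∈S^{d-1}} |ρ_{A₁}(θ) − ρ_{A₂}(θ)| satisfies δ(A₁,A₂) = sup_{x∈ℝ^d} |d_r(x,A₁) − d_r(x,A₂)| = max{e_r(A₁,A₂), e_r(A₂,A₁)}. -/
open scoped ENNReal

noncomputable section

/-- Radial function of a set `A ⊆ ℝ^d` in direction `θ`. -/
def radialFn {d : ℕ} (A : Set (EuclideanSpace ℝ (Fin d)))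
    (θ : EuclideanSpace ℝ (Fin d)) : ℝ≥0∞ :=
  sSup (ENNReal.ofReal '' {r : ℝ | 0 ≤ r ∧ r • θ ∈ A})

/-- A star set: nonempty and closed under scaling by `t ∈ [0,1]`. -/
def IsStarSet {d : ℕ} (A : Set (EuclideanSpace ℝ (Fin d))) : Prop :=
  A.Nonempty ∧ ∀ a ∈ A, ∀ t : ℝ, 0 ≤ t → t ≤ 1 → t • a ∈ A

/-- A star body: a radially closed star set. -/
def IsStarBody {d : ℕ} (A : Set (EuclideanSpace ℝ (Fin d))) : Prop :=
  IsStarSet A ∧ ∀ θ : EuclideanSpace ℝ (Fin d), ‖θ‖ = 1 → radialFn A θ ≠ ⊤ →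
    (radialFn A θ).toReal • θ ∈ A

open scoped Classical in
/-- The radial distance from a point `x` to a star body `A`:
`0` if `x ∈ A`, and `‖x‖ - ρ_A(x/‖x‖)` otherwise. -/
def radialDist {d : ℕ} (x : EuclideanSpace ℝ (Fin d))
    (A : Set (EuclideanSpace ℝ (Fin d))) : ℝ :=
  if x ∈ A then 0 else ‖x‖ - (radialFn A (‖x‖⁻¹ • x)).toReal

/-- The radial metric between star bodies. -/
def radialMetric {d : ℕ} (A₁ A₂ : Set (EuclideanSpace ℝ (Fin d))) : ℝ :=
  ⨆ θ : Metric.sphere (0 : EuclideanSpace ℝ (Fin d)) 1,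
    |(radialFn A₁ (θ : EuclideanSpace ℝ (Fin d))).toReal -
      (radialFn A₂ (θ : EuclideanSpace ℝ (Fin d))).toReal|

/-- The radial excess of `A₁` over `A₂`. -/
def radialExcess {d : ℕ} (A₁ A₂ : Set (EuclideanSpace ℝ (Fin d))) : ℝ :=
  ⨆ a : A₁, radialDist (a : EuclideanSpace ℝ (Fin d)) A₂

/-!
In polar coordinates `x = r • θ` a bounded star body is `{r • θ | r ≤ ρ_A θ}`, so
`d_r (r • θ, A) = max (r - ρ_A θ) 0`. Since `max · 0` is 1-Lipschitz, this gives
`|d_r(x, A₁) - d_r(x, A₂)| ≤ |ρ_{A₁} θ - ρ_{A₂} θ| ≤ δ(A₁, A₂)`, and in particular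
`e_r(Aᵢ, Aⱼ) ≤ δ(A₁, A₂)` because `d_r` vanishes on `Aᵢ`. Conversely, if `ρ_{A₂} θ ≤ ρ_{A₁} θ`,
the boundary point `ρ_{A₁} θ • θ ∈ A₁` has radial distance exactly `ρ_{A₁} θ - ρ_{A₂} θ` to `A₂`.
-/

section RadialDistance

variable {d : ℕ} {A A₁ A₂ : Set (EuclideanSpace ℝ (Fin d))} {θ x : EuclideanSpace ℝ (Fin d)}

lemma IsStarSet.zero_mem (hA : IsStarSet A) : (0 : EuclideanSpace ℝ (Fin d)) ∈ A := by
  obtain ⟨a, ha⟩ := hA.1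
  simpa using hA.2 a ha 0 le_rfl zero_le_one

lemma radialFn_le_ofReal {M : ℝ} (hM : ∀ x ∈ A, ‖x‖ ≤ M) (hθ : ‖θ‖ = 1) :
    radialFn A θ ≤ ENNReal.ofReal M := by
  refine sSup_le ?_
  rintro _ ⟨r, ⟨hr, hrA⟩, rfl⟩
  have h := hM _ hrA
  rw [norm_smul, hθ, mul_one, Real.norm_of_nonneg hr] at h
  exact ENNReal.ofReal_le_ofReal h

lemma radialFn_ne_top (hb : Bornology.IsBounded A) (hθ : ‖θ‖ = 1) : radialFn A θ ≠ ⊤ := by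
  obtain ⟨M, hM⟩ := hb.exists_norm_le
  exact ne_top_of_le_ne_top ENNReal.ofReal_ne_top (radialFn_le_ofReal hM hθ)

lemma bddAbove_abs_radialFn_sub (hb₁ : Bornology.IsBounded A₁) (hb₂ : Bornology.IsBounded A₂) :
    BddAbove (Set.range fun θ : Metric.sphere (0 : EuclideanSpace ℝ (Fin d)) 1 =>
      |(radialFn A₁ θ).toReal - (radialFn A₂ θ).toReal|) := by
  obtain ⟨M₁, hM₁⟩ := hb₁.exists_norm_le
  obtain ⟨M₂, hM₂⟩ := hb₂.exists_norm_le
  refine ⟨max M₁ 0 + max M₂ 0, ?_⟩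
  rintro _ ⟨⟨θ, hθ⟩, rfl⟩
  rw [mem_sphere_zero_iff_norm] at hθ
  have h₁ := ENNReal.toReal_le_of_le_ofReal (le_max_right M₁ 0)
    (radialFn_le_ofReal (fun x hx => (hM₁ x hx).trans (le_max_left M₁ 0)) hθ)
  have h₂ := ENNReal.toReal_le_of_le_ofReal (le_max_right M₂ 0)
    (radialFn_le_ofReal (fun x hx => (hM₂ x hx).trans (le_max_left M₂ 0)) hθ)
  have h₁' : 0 ≤ (radialFn A₁ θ).toReal := ENNReal.toReal_nonneg
  have h₂' : 0 ≤ (radialFn A₂ θ).toReal := ENNReal.toReal_nonneg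
  rw [abs_le]
  constructor <;> linarith

lemma abs_radialFn_sub_le_radialMetric (hb₁ : Bornology.IsBounded A₁)
    (hb₂ : Bornology.IsBounded A₂) (hθ : ‖θ‖ = 1) :
    |(radialFn A₁ θ).toReal - (radialFn A₂ θ).toReal| ≤ radialMetric A₁ A₂ :=
  le_ciSup (bddAbove_abs_radialFn_sub hb₁ hb₂) ⟨θ, mem_sphere_zero_iff_norm.mpr hθ⟩

lemma radialMetric_nonneg : 0 ≤ radialMetric A₁ A₂ :=
  Real.iSup_nonneg fun _ => abs_nonneg _

lemma radialMetric_comm : radialMetric A₁ A₂ = radialMetric A₂ A₁ := by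
  simp only [radialMetric, abs_sub_comm]

lemma mem_iff_le_radialFn (hA : IsStarBody A) (hb : Bornology.IsBounded A) (hθ : ‖θ‖ = 1)
    {r : ℝ} (hr : 0 ≤ r) : r • θ ∈ A ↔ r ≤ (radialFn A θ).toReal := by
  have hne := radialFn_ne_top hb hθ
  constructor
  · intro hrA
    rw [← ENNReal.ofReal_le_iff_le_toReal hne]
    exact le_sSup ⟨r, ⟨hr, hrA⟩, rfl⟩
  · intro hle
    have hbdry := hA.2 θ hθ hne
    rcases hr.eq_or_lt with rfl | hpos
    · simpa using hA.1.zero_mem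
    have hρ : 0 < (radialFn A θ).toReal := hpos.trans_le hle
    have h := hA.1.2 _ hbdry (r / (radialFn A θ).toReal) (div_nonneg hr hρ.le)
      ((div_le_one hρ).mpr hle)
    rwa [smul_smul, div_mul_cancel₀ _ hρ.ne'] at h

lemma radialDist_of_mem (hx : x ∈ A) : radialDist x A = 0 :=
  if_pos hx

lemma radialDist_le_norm (x : EuclideanSpace ℝ (Fin d)) (A : Set (EuclideanSpace ℝ (Fin d))) :
    radialDist x A ≤ ‖x‖ := by
  unfold radialDist
  split
  · positivity
  · linarith [ENNReal.toReal_nonneg (a := radialFn A (‖x‖⁻¹ • x))]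

lemma radialDist_smul (hA : IsStarBody A) (hb : Bornology.IsBounded A) (hθ : ‖θ‖ = 1)
    {r : ℝ} (hr : 0 ≤ r) : radialDist (r • θ) A = max (r - (radialFn A θ).toReal) 0 := by
  by_cases hrA : r • θ ∈ A
  · rw [radialDist_of_mem hrA, max_eq_right]
    linarith [(mem_iff_le_radialFn hA hb hθ hr).mp hrA]
  · have hlt := not_le.mp (mt (mem_iff_le_radialFn hA hb hθ hr).mpr hrA)
    have hpos : 0 < r := lt_of_le_of_lt ENNReal.toReal_nonneg hlt
    have hnorm : ‖r • θ‖ = r := by rw [norm_smul, hθ, mul_one, Real.norm_of_nonneg hr]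
    rw [radialDist, if_neg hrA, hnorm, smul_smul, inv_mul_cancel₀ hpos.ne', one_smul,
      max_eq_left (by linarith)]

lemma radialDist_eq_max (hA : IsStarBody A) (hb : Bornology.IsBounded A) (hx : x ≠ 0) :
    radialDist x A = max (‖x‖ - (radialFn A (‖x‖⁻¹ • x)).toReal) 0 := by
  conv_lhs => rw [← smul_inv_smul₀ (norm_ne_zero_iff.mpr hx) x]
  exact radialDist_smul hA hb (norm_smul_inv_norm hx) (norm_nonneg x)

lemma radialDist_nonneg (hA : IsStarBody A) (hb : Bornology.IsBounded A)
    (x : EuclideanSpace ℝ (Fin d)) : 0 ≤ radialDist x A := by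
  rcases eq_or_ne x 0 with rfl | hx
  · exact (radialDist_of_mem hA.1.zero_mem).ge
  · exact (radialDist_eq_max hA hb hx).symm ▸ le_max_right _ _

lemma abs_radialDist_sub_le_radialMetric (hA₁ : IsStarBody A₁) (hA₂ : IsStarBody A₂)
    (hb₁ : Bornology.IsBounded A₁) (hb₂ : Bornology.IsBounded A₂)
    (x : EuclideanSpace ℝ (Fin d)) :
    |radialDist x A₁ - radialDist x A₂| ≤ radialMetric A₁ A₂ := by
  rcases eq_or_ne x 0 with rfl | hx
  · rw [radialDist_of_mem hA₁.1.zero_mem, radialDist_of_mem hA₂.1.zero_mem, sub_zero, abs_zero]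
    exact radialMetric_nonneg
  rw [radialDist_eq_max hA₁ hb₁ hx, radialDist_eq_max hA₂ hb₂ hx]
  calc _ ≤ |(‖x‖ - (radialFn A₁ (‖x‖⁻¹ • x)).toReal) - (‖x‖ - (radialFn A₂ (‖x‖⁻¹ • x)).toReal)| :=
        abs_max_sub_max_le_abs _ _ _
    _ = |(radialFn A₁ (‖x‖⁻¹ • x)).toReal - (radialFn A₂ (‖x‖⁻¹ • x)).toReal| := by
        rw [sub_sub_sub_cancel_left, abs_sub_comm]
    _ ≤ radialMetric A₁ A₂ := abs_radialFn_sub_le_radialMetric hb₁ hb₂ (norm_smul_inv_norm hx)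

lemma radialExcess_le_radialMetric (hA₁ : IsStarBody A₁) (hA₂ : IsStarBody A₂)
    (hb₁ : Bornology.IsBounded A₁) (hb₂ : Bornology.IsBounded A₂) :
    radialExcess A₁ A₂ ≤ radialMetric A₁ A₂ := by
  refine Real.iSup_le (fun a => ?_) radialMetric_nonneg
  calc radialDist (a : EuclideanSpace ℝ (Fin d)) A₂
      = |radialDist (a : EuclideanSpace ℝ (Fin d)) A₁ - radialDist a A₂| := by
        rw [radialDist_of_mem a.2, zero_sub, abs_neg,
          abs_of_nonneg (radialDist_nonneg hA₂ hb₂ a)]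
    _ ≤ radialMetric A₁ A₂ := abs_radialDist_sub_le_radialMetric hA₁ hA₂ hb₁ hb₂ a

lemma bddAbove_radialDist (hb₁ : Bornology.IsBounded A₁) :
    BddAbove (Set.range fun a : A₁ => radialDist (a : EuclideanSpace ℝ (Fin d)) A₂) := by
  obtain ⟨M, hM⟩ := hb₁.exists_norm_le
  exact ⟨M, by rintro _ ⟨a, rfl⟩; exact (radialDist_le_norm _ _).trans (hM a a.2)⟩

lemma exists_mem_radialDist_eq_radialFn_sub (hA₁ : IsStarBody A₁) (hA₂ : IsStarBody A₂)
    (hb₁ : Bornology.IsBounded A₁) (hb₂ : Bornology.IsBounded A₂) (hθ : ‖θ‖ = 1)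
    (hle : (radialFn A₂ θ).toReal ≤ (radialFn A₁ θ).toReal) :
    ∃ x ∈ A₁, radialDist x A₂ = (radialFn A₁ θ).toReal - (radialFn A₂ θ).toReal := by
  have hρ : 0 ≤ (radialFn A₁ θ).toReal := ENNReal.toReal_nonneg
  refine ⟨(radialFn A₁ θ).toReal • θ, (mem_iff_le_radialFn hA₁ hb₁ hθ hρ).mpr le_rfl, ?_⟩
  rw [radialDist_smul hA₂ hb₂ hθ hρ, max_eq_left (sub_nonneg.mpr hle)]

lemma exists_radialDist_eq_abs_radialFn_sub (hA₁ : IsStarBody A₁) (hA₂ : IsStarBody A₂)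
    (hb₁ : Bornology.IsBounded A₁) (hb₂ : Bornology.IsBounded A₂) (hθ : ‖θ‖ = 1) :
    (∃ x ∈ A₁, radialDist x A₂ = |(radialFn A₁ θ).toReal - (radialFn A₂ θ).toReal|) ∨
      ∃ x ∈ A₂, radialDist x A₁ = |(radialFn A₁ θ).toReal - (radialFn A₂ θ).toReal| := by
  rcases le_total (radialFn A₂ θ).toReal (radialFn A₁ θ).toReal with hle | hle
  · left
    rw [abs_of_nonneg (sub_nonneg.mpr hle)]
    exact exists_mem_radialDist_eq_radialFn_sub hA₁ hA₂ hb₁ hb₂ hθ hle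
  · right
    rw [abs_sub_comm, abs_of_nonneg (sub_nonneg.mpr hle)]
    exact exists_mem_radialDist_eq_radialFn_sub hA₂ hA₁ hb₂ hb₁ hθ hle

end RadialDistance

theorem radialMetric_eq_sup_radialDist {d : ℕ} (A₁ A₂ : Set (EuclideanSpace ℝ (Fin d)))
    (hA₁ : IsStarBody A₁) (hA₂ : IsStarBody A₂)
    (hb₁ : Bornology.IsBounded A₁) (hb₂ : Bornology.IsBounded A₂) :
    radialMetric A₁ A₂ =
        (⨆ x : EuclideanSpace ℝ (Fin d), |radialDist x A₁ - radialDist x A₂|) ∧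
      radialMetric A₁ A₂ = max (radialExcess A₁ A₂) (radialExcess A₂ A₁) := by
  have hkey := abs_radialDist_sub_le_radialMetric hA₁ hA₂ hb₁ hb₂
  have hbdd : BddAbove (Set.range fun x => |radialDist x A₁ - radialDist x A₂|) :=
    ⟨_, Set.forall_mem_range.mpr hkey⟩
  have hwit : ∀ θ : Metric.sphere (0 : EuclideanSpace ℝ (Fin d)) 1, _ := fun θ =>
    exists_radialDist_eq_abs_radialFn_sub hA₁ hA₂ hb₁ hb₂ (mem_sphere_zero_iff_norm.mp θ.2)
  constructor
  · refine le_antisymm (Real.iSup_le (fun θ => ?_) (Real.iSup_nonneg fun _ => abs_nonneg _))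
      (ciSup_le hkey)
    rcases hwit θ with ⟨x, hx, hdist⟩ | ⟨x, hx, hdist⟩
    · refine (le_ciSup hbdd x).trans_eq' ?_
      rw [radialDist_of_mem hx, zero_sub, abs_neg, hdist, abs_abs]
    · refine (le_ciSup hbdd x).trans_eq' ?_
      rw [radialDist_of_mem hx, sub_zero, hdist, abs_abs]
  · refine le_antisymm (Real.iSup_le (fun θ => ?_) ?_) (max_le
      (radialExcess_le_radialMetric hA₁ hA₂ hb₁ hb₂)
      (radialMetric_comm (A₁ := A₁) ▸ radialExcess_le_radialMetric hA₂ hA₁ hb₂ hb₁))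
    · rcases hwit θ with ⟨x, hx, hdist⟩ | ⟨x, hx, hdist⟩
      · exact le_max_of_le_left (hdist ▸ le_ciSup (bddAbove_radialDist hb₁) ⟨x, hx⟩)
      · exact le_max_of_le_right (hdist ▸ le_ciSup (bddAbove_radialDist hb₂) ⟨x, hx⟩)
    · exact le_max_of_le_left (Real.iSup_nonneg fun a => radialDist_nonneg hA₂ hb₂ a)
end
end

section
/- For a star body A ⊆ ℝ^d, the radial distance functional d_r(·,A) : ℝ^d → ℝ is continuous if and only if the radial function ρ_A : S^{d-1} → [0,∞] is continuous. -/
open scoped ENNReal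

noncomputable section

/-!
Because `A` is radially closed, `d_r(x, A) = ‖x‖ ∸ ρ_A(x/‖x‖)` with truncated subtraction in
`ℝ≥0∞`, even at `x = 0`, where `ρ_A(0) = ∞`. If `ρ_A` is continuous on the sphere, this expression
is continuous away from the origin, and at the origin it is squeezed between `0` and `‖x‖`.
Conversely, on the sphere `min ρ_A r = r ∸ d_r(r θ, A)` for every `r ≥ 0`, so all finite
truncations of `ρ_A` are continuous, and an `ℝ≥0∞`-valued function with continuous truncations is
continuous.
-/

open Filter Topology Metric
open scoped NNReal

theorem ENNReal.continuous_of_forall_continuous_min_coe {X : Type*} [TopologicalSpace X]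
    {f : X → ℝ≥0∞} (h : ∀ r : ℝ≥0, Continuous fun x => min (f x) r) : Continuous f := by
  refine continuous_iff_continuousAt.2 fun x => ?_
  rcases eq_top_or_lt_top (f x) with hx | hx
  · rw [ContinuousAt, hx, ENNReal.tendsto_nhds_top_iff_nnreal]
    intro M
    have hM : (M : ℝ≥0∞) < min (f x) ↑(M + 1) := by
      simpa [hx] using ENNReal.lt_add_right ENNReal.coe_ne_top one_ne_zero
    filter_upwards [(h (M + 1)).continuousAt.eventually (lt_mem_nhds hM)] with y hy
    exact hy.trans_le (min_le_left _ _)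
  · obtain ⟨r, hxr, -⟩ := ENNReal.lt_iff_exists_nnreal_btwn.1 hx
    have hr : min (f x) r < r := by simpa using hxr
    refine (h r).continuousAt.congr ?_
    filter_upwards [(h r).continuousAt.eventually (gt_mem_nhds hr)] with y hy
    exact min_eq_left ((min_lt_iff.1 hy).resolve_right (lt_irrefl _)).le

theorem ContinuousOn.comp_inv_norm_smul {E Y : Type*} [NormedAddCommGroup E] [NormedSpace ℝ E]
    [TopologicalSpace Y] {f : E → Y} (hf : ContinuousOn f (sphere 0 1)) :
    ContinuousOn (fun x => f (‖x‖⁻¹ • x)) {0}ᶜ := by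
  refine hf.comp (ContinuousOn.smul ?_ continuousOn_id) fun x hx => ?_
  · exact continuous_norm.continuousOn.inv₀ fun x hx => norm_ne_zero_iff.2 hx
  · simp [norm_smul, inv_mul_cancel₀ (norm_ne_zero_iff.2 hx)]

variable {d : ℕ} {A : Set (EuclideanSpace ℝ (Fin d))} {θ : EuclideanSpace ℝ (Fin d)}

namespace IsStarSet

theorem zero_mem_s8 (hA : IsStarSet A) : (0 : EuclideanSpace ℝ (Fin d)) ∈ A := by
  obtain ⟨a, ha⟩ := hA.1
  simpa using hA.2 a ha 0 le_rfl zero_le_one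

theorem smul_mem_of_le (hA : IsStarSet A) {r s : ℝ} (hs : s • θ ∈ A) (hr : 0 ≤ r)
    (hrs : r ≤ s) : r • θ ∈ A := by
  rcases (hr.trans hrs).eq_or_lt with rfl | hs0
  · rwa [le_antisymm hrs hr]
  · simpa [smul_smul, div_mul_cancel₀ _ hs0.ne'] using
      hA.2 _ hs (r / s) (div_nonneg hr hs0.le) ((div_le_one hs0).2 hrs)

theorem radialFn_zero (hA : IsStarSet A) : radialFn A 0 = ⊤ :=
  ENNReal.eq_top_of_forall_nnreal_le fun r =>
    le_sSup ⟨r, ⟨r.coe_nonneg, by simpa using hA.zero_mem_s8⟩, ENNReal.ofReal_coe_nnreal⟩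

end IsStarSet

namespace IsStarBody

theorem smul_mem_iff (hA : IsStarBody A) (hθ : ‖θ‖ = 1) {r : ℝ} (hr : 0 ≤ r) :
    r • θ ∈ A ↔ ENNReal.ofReal r ≤ radialFn A θ := by
  refine ⟨fun h => le_sSup ⟨r, ⟨hr, h⟩, rfl⟩, fun h => ?_⟩
  rcases h.lt_or_eq with hlt | heq
  · obtain ⟨_, ⟨s, ⟨-, hs⟩, rfl⟩, hrs⟩ := lt_sSup_iff.1 hlt
    exact hA.1.smul_mem_of_le hs hr ((ENNReal.ofReal_lt_ofReal_iff_of_nonneg hr).1 hrs).le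
  · have hfin : radialFn A θ ≠ ⊤ := heq ▸ ENNReal.ofReal_ne_top
    simpa [← heq, ENNReal.toReal_ofReal hr] using hA.2 θ hθ hfin

theorem radialDist_eq (hA : IsStarBody A) (x : EuclideanSpace ℝ (Fin d)) :
    radialDist x A = (ENNReal.ofReal ‖x‖ - radialFn A (‖x‖⁻¹ • x)).toReal := by
  rcases eq_or_ne x 0 with rfl | hx
  · simp [radialDist, hA.1.zero_mem_s8, hA.1.radialFn_zero]
  have hnorm : ‖x‖ ≠ 0 := norm_ne_zero_iff.2 hx
  have hmem := hA.smul_mem_iff (θ := ‖x‖⁻¹ • x) (by simp [norm_smul, inv_mul_cancel₀ hnorm])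
    (norm_nonneg x)
  rw [smul_inv_smul₀ hnorm] at hmem
  by_cases hxA : x ∈ A
  · rw [radialDist, if_pos hxA, tsub_eq_zero_of_le (hmem.1 hxA), ENNReal.toReal_zero]
  · have hlt := lt_of_not_ge (mt hmem.2 hxA)
    rw [radialDist, if_neg hxA, ENNReal.toReal_sub_of_le hlt.le ENNReal.ofReal_ne_top,
      ENNReal.toReal_ofReal (norm_nonneg x)]

theorem radialDist_smul (hA : IsStarBody A) (hθ : ‖θ‖ = 1) {r : ℝ} (hr : 0 ≤ r) :
    radialDist (r • θ) A = (ENNReal.ofReal r - radialFn A θ).toReal := by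
  rcases hr.eq_or_lt with rfl | hr
  · simp [radialDist, hA.1.zero_mem_s8]
  rw [hA.radialDist_eq, norm_smul, hθ, mul_one, Real.norm_of_nonneg hr.le, inv_smul_smul₀ hr.ne']

theorem min_radialFn_coe (hA : IsStarBody A) (hθ : ‖θ‖ = 1) (r : ℝ≥0) :
    min (radialFn A θ) r = r - ENNReal.ofReal (radialDist ((r : ℝ) • θ) A) := by
  rw [hA.radialDist_smul hθ r.coe_nonneg, ENNReal.ofReal_coe_nnreal,
    ENNReal.ofReal_toReal (ne_top_of_le_ne_top ENNReal.coe_ne_top tsub_le_self)]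
  rcases le_total (radialFn A θ) r with h | h
  · rw [min_eq_left h, ENNReal.sub_sub_cancel ENNReal.coe_ne_top h]
  · rw [min_eq_right h, tsub_eq_zero_of_le h, tsub_zero]

theorem continuous_radialFn (hA : IsStarBody A) (hc : Continuous (radialDist · A)) :
    Continuous fun θ : sphere (0 : EuclideanSpace ℝ (Fin d)) 1 => radialFn A θ := by
  refine ENNReal.continuous_of_forall_continuous_min_coe fun r => ?_
  simp_rw [fun θ : sphere (0 : EuclideanSpace ℝ (Fin d)) 1 =>
    hA.min_radialFn_coe (norm_eq_of_mem_sphere θ) r]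
  exact (ENNReal.continuous_sub_left ENNReal.coe_ne_top).comp <|
    ENNReal.continuous_ofReal.comp <| hc.comp <| by fun_prop

theorem continuous_radialDist (hA : IsStarBody A)
    (hρ : Continuous fun θ : sphere (0 : EuclideanSpace ℝ (Fin d)) 1 => radialFn A θ) :
    Continuous (radialDist · A) := by
  simp_rw [hA.radialDist_eq]
  refine continuous_iff_continuousAt.2 fun x =>
    (ENNReal.tendsto_toReal (ne_top_of_le_ne_top ENNReal.ofReal_ne_top tsub_le_self)).comp ?_
  have hnorm : Continuous fun y : EuclideanSpace ℝ (Fin d) => ENNReal.ofReal ‖y‖ :=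
    ENNReal.continuous_ofReal.comp continuous_norm
  rcases eq_or_ne x 0 with rfl | hx
  · simp only [norm_zero, ENNReal.ofReal_zero, zero_tsub]
    exact tendsto_of_tendsto_of_tendsto_of_le_of_le tendsto_const_nhds
      (by simpa using hnorm.tendsto 0) (fun _ => zero_le) (fun _ => tsub_le_self)
  · have hρ' : ContinuousOn (radialFn A) (sphere 0 1) :=
      continuousOn_iff_continuous_domRestrict.2 hρ
    exact ENNReal.Tendsto.sub hnorm.continuousAt
      (hρ'.comp_inv_norm_smul.continuousAt (isOpen_compl_singleton.mem_nhds hx))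
      (Or.inl ENNReal.ofReal_ne_top)

end IsStarBody

theorem continuous_radialDist_iff {d : ℕ} (A : Set (EuclideanSpace ℝ (Fin d)))
    (hA : IsStarBody A) :
    Continuous (fun x => radialDist x A) ↔
      Continuous fun θ : Metric.sphere (0 : EuclideanSpace ℝ (Fin d)) 1 =>
        radialFn A (θ : EuclideanSpace ℝ (Fin d)) :=
  ⟨hA.continuous_radialFn, hA.continuous_radialDist⟩
end
end

section
/- If a net (K_i) of closed convex sets in ℝ^d containing the origin converges in the radial Wijsman topology to a star body A (meaning ρ_{K_i} → ρ_A pointwise on S^{d-1}), then A is convex. -/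
open scoped ENNReal

noncomputable section

lemma radialFn_le_of_mem {d : ℕ} {A : Set (EuclideanSpace ℝ (Fin d))}
    {θ : EuclideanSpace ℝ (Fin d)} {r : ℝ} (hr : 0 ≤ r) (h : r • θ ∈ A) :
    ENNReal.ofReal r ≤ radialFn A θ :=
  le_sSup ⟨r, ⟨hr, h⟩, rfl⟩

lemma zero_mem_of_isStarSet {d : ℕ} {A : Set (EuclideanSpace ℝ (Fin d))}
    (hA : IsStarSet A) : (0 : EuclideanSpace ℝ (Fin d)) ∈ A := by
  obtain ⟨a, ha⟩ := hA.1
  have := hA.2 a ha 0 le_rfl zero_le_one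
  simpa using this

lemma mem_of_lt_radialFn {d : ℕ} {A : Set (EuclideanSpace ℝ (Fin d))}
    (hA : IsStarSet A) {θ : EuclideanSpace ℝ (Fin d)} {r : ℝ} (hr : 0 ≤ r)
    (h : ENNReal.ofReal r < radialFn A θ) : r • θ ∈ A := by
  obtain ⟨s, hs, hlt⟩ := lt_sSup_iff.mp h
  obtain ⟨r', ⟨hr', hmem⟩, rfl⟩ := hs
  have hrr' : r < r' := by
    by_contra hle
    exact absurd (ENNReal.ofReal_le_ofReal (not_lt.mp hle)) (not_le.mpr hlt)
  have hr'pos : 0 < r' := lt_of_le_of_lt hr hrr'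
  have := hA.2 _ hmem (r / r') (div_nonneg hr hr'pos.le)
    (by rw [div_le_one hr'pos]; exact hrr'.le)
  rwa [smul_smul, div_mul_cancel₀ _ hr'pos.ne'] at this

lemma mem_of_le_radialFn {d : ℕ} {A : Set (EuclideanSpace ℝ (Fin d))}
    (hA : IsStarBody A) {θ : EuclideanSpace ℝ (Fin d)} (hθ : ‖θ‖ = 1) {r : ℝ}
    (hr : 0 ≤ r) (h : ENNReal.ofReal r ≤ radialFn A θ) : r • θ ∈ A := by
  rcases eq_top_or_lt_top (radialFn A θ) with htop | hfin
  · exact mem_of_lt_radialFn hA.1 hr (htop ▸ ENNReal.ofReal_lt_top)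
  rcases lt_or_eq_of_le h with hlt | heq
  · exact mem_of_lt_radialFn hA.1 hr hlt
  · have hmem := hA.2 θ hθ hfin.ne
    have hrρ : r = (radialFn A θ).toReal := by
      rw [← heq, ENNReal.toReal_ofReal hr]
    rwa [hrρ]

theorem convex_of_radialWijsman_limit_of_convex {d : ℕ} {ι : Type*} (l : Filter ι)
    [l.NeBot] (K : ι → Set (EuclideanSpace ℝ (Fin d)))
    (A : Set (EuclideanSpace ℝ (Fin d)))
    (hK : ∀ i, IsClosed (K i) ∧ Convex ℝ (K i) ∧ (0 : EuclideanSpace ℝ (Fin d)) ∈ K i)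
    (hA : IsStarBody A)
    (hconv : ∀ θ : EuclideanSpace ℝ (Fin d), ‖θ‖ = 1 →
      Filter.Tendsto (fun i => radialFn (K i) θ) l (nhds (radialFn A θ))) :
    Convex ℝ A := by
  intro x hx y hy s t hs ht hst
  rcases eq_or_ne x 0 with rfl | hx0
  · simp only [smul_zero, zero_add]
    exact hA.1.2 y hy t ht (by linarith)
  rcases eq_or_ne y 0 with rfl | hy0
  · simp only [smul_zero, add_zero]
    exact hA.1.2 x hx s hs (by linarith)
  set z := s • x + t • y with hzdef
  rcases eq_or_ne z 0 with hz0 | hz0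
  · rw [hz0]; exact zero_mem_of_isStarSet hA.1
  have hxn : (0:ℝ) < ‖x‖ := norm_pos_iff.mpr hx0
  have hyn : (0:ℝ) < ‖y‖ := norm_pos_iff.mpr hy0
  have hzn : (0:ℝ) < ‖z‖ := norm_pos_iff.mpr hz0
  set θx := ‖x‖⁻¹ • x with hθxdef
  set θy := ‖y‖⁻¹ • y with hθydef
  set θz := ‖z‖⁻¹ • z with hθzdef
  have hθx : ‖θx‖ = 1 := by
    rw [hθxdef, norm_smul, norm_inv, norm_norm, inv_mul_cancel₀ hxn.ne']
  have hθy : ‖θy‖ = 1 := by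
    rw [hθydef, norm_smul, norm_inv, norm_norm, inv_mul_cancel₀ hyn.ne']
  have hθz : ‖θz‖ = 1 := by
    rw [hθzdef, norm_smul, norm_inv, norm_norm, inv_mul_cancel₀ hzn.ne']
  have hxθ : ‖x‖ • θx = x := by
    rw [hθxdef, smul_smul, mul_inv_cancel₀ hxn.ne', one_smul]
  have hyθ : ‖y‖ • θy = y := by
    rw [hθydef, smul_smul, mul_inv_cancel₀ hyn.ne', one_smul]
  have hzθ : ‖z‖ • θz = z := by
    rw [hθzdef, smul_smul, mul_inv_cancel₀ hzn.ne', one_smul]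
  have key : ∀ ε : ℝ, 0 < ε → ε < 1 →
      ENNReal.ofReal ((1 - ε) * ‖z‖) ≤ radialFn A θz := by
    intro ε hε hε1
    have hx1 : ENNReal.ofReal ((1 - ε) * ‖x‖) < radialFn A θx := by
      refine lt_of_lt_of_le ?_ (radialFn_le_of_mem (norm_nonneg x) (by rw [hxθ]; exact hx))
      exact (ENNReal.ofReal_lt_ofReal_iff hxn).mpr (by nlinarith)
    have hy1 : ENNReal.ofReal ((1 - ε) * ‖y‖) < radialFn A θy := by
      refine lt_of_lt_of_le ?_ (radialFn_le_of_mem (norm_nonneg y) (by rw [hyθ]; exact hy))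
      exact (ENNReal.ofReal_lt_ofReal_iff hyn).mpr (by nlinarith)
    have hex := (hconv θx hθx).eventually_const_lt hx1
    have hey := (hconv θy hθy).eventually_const_lt hy1
    have hz' : ∀ᶠ i in l, ENNReal.ofReal ((1 - ε) * ‖z‖) ≤ radialFn (K i) θz := by
      filter_upwards [hex, hey] with i hix hiy
      have hKstar : IsStarSet (K i) := by
        refine ⟨⟨0, (hK i).2.2⟩, fun a ha u hu hu1 => ?_⟩
        exact (hK i).2.1.smul_mem_of_zero_mem (hK i).2.2 ha ⟨hu, hu1⟩
      have hxi : (1 - ε) • x ∈ K i := by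
        have := mem_of_lt_radialFn hKstar
          (mul_nonneg (by linarith) (norm_nonneg x)) hix
        rwa [mul_smul, hxθ] at this
      have hyi : (1 - ε) • y ∈ K i := by
        have := mem_of_lt_radialFn hKstar
          (mul_nonneg (by linarith) (norm_nonneg y)) hiy
        rwa [mul_smul, hyθ] at this
      have hzi : (1 - ε) • z ∈ K i := by
        have := (hK i).2.1 hxi hyi hs ht hst
        have heq : s • ((1 - ε) • x) + t • ((1 - ε) • y) = (1 - ε) • z := by
          rw [hzdef]; module
        rwa [heq] at this
      refine radialFn_le_of_mem (mul_nonneg (by linarith) (norm_nonneg z)) ?_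
      rwa [mul_smul, hzθ]
    exact ge_of_tendsto (hconv θz hθz) hz'
  have hfinal : ENNReal.ofReal ‖z‖ ≤ radialFn A θz := by
    by_contra hcon
    push_neg at hcon
    have hne : radialFn A θz ≠ ⊤ := hcon.ne_top
    set ρ := (radialFn A θz).toReal with hρdef
    have hρ : ρ < ‖z‖ := (ENNReal.lt_ofReal_iff_toReal_lt hne).mp hcon
    have hρ0 : 0 ≤ ρ := ENNReal.toReal_nonneg
    set ε := (‖z‖ - ρ) / (2 * ‖z‖) with hεdef
    have hε : 0 < ε := div_pos (by linarith) (by positivity)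
    have hε1 : ε < 1 := by
      rw [hεdef, div_lt_one (by positivity)]; linarith
    have h4 := key ε hε hε1
    have h5 : (1 - ε) * ‖z‖ ≤ ρ := (ENNReal.ofReal_le_iff_le_toReal hne).mp h4
    have h2 : (1 - ε) * ‖z‖ = ‖z‖ - (‖z‖ - ρ) / 2 := by
      rw [hεdef]; field_simp
    rw [h2] at h5; linarith
  have := mem_of_le_radialFn hA hθz (norm_nonneg z) hfinal
  rwa [hzθ] at this
end
end
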